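/- Let u be a Schwartz-class solution of the derivative nonlinear Schrödinger equation i∂_t u + ∂_x² u = −i∂_x(|u|² u). Then the energy E(u(t)) = ∫_ℝ ( |∂_x u(t,x)|² − (3/2) Im( |u(t,x)|² u(t,x) \overline{∂_x u(t,x)} ) + (1/2) |u(t,x)|⁶ ) dx is independent of t. -/

import Mathlib

open MeasureTheory Complex

/-- A Schwartz-class solution of the derivative nonlinear Schrödinger equation
`i∂_t u + ∂_x² u = −i∂_x(|u|²u)`: `u` is smooth in both variables, `u(t,·)` is Schwartz
for every `t`, all space-time derivatives decay rapidly in `x` uniformly for `t` in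
compact sets, and the equation holds pointwise. -/
def IsDNLSSolution (u : ℝ → ℝ → ℂ) : Prop :=
  ContDiff ℝ (⊤ : ℕ∞) (fun q : ℝ × ℝ => u q.1 q.2) ∧
  (∀ t : ℝ, ∃ φ : SchwartzMap ℝ ℂ, ∀ x : ℝ, φ x = u t x) ∧
  (∀ (i j k : ℕ) (K : Set ℝ), IsCompact K → ∃ C : ℝ, ∀ t ∈ K, ∀ x : ℝ,
    |x| ^ k * ‖iteratedDeriv i (fun s => iteratedDeriv j (fun y => u s y) x) t‖ ≤ C) ∧
  (∀ t x : ℝ,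
    Complex.I * deriv (fun s => u s x) t + deriv (deriv (u t)) x
      = -Complex.I * deriv (fun y => (‖u t y‖ : ℂ) ^ 2 * u t y) x)

/-- The DNLS energy functional
`E(v) = ∫ ( |v_x|² − (3/2) Im(|v|² v conj(v_x)) + (1/2)|v|⁶ ) dx`. -/
noncomputable def energy (v : ℝ → ℂ) : ℝ :=
  ∫ x : ℝ, (‖deriv v x‖ ^ 2
    - (3 / 2) * ((‖v x‖ : ℂ) ^ 2 * v x * (starRingEnd ℂ) (deriv v x)).im
    + (1 / 2) * ‖v x‖ ^ 6)

/-!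
Along a solution, the energy density `e = |uₓ|² − (3/2) Im(|u|² u ūₓ) + ½|u|⁶` obeys a local
conservation law `∂ₜe = ∂ₓG`: the flux `G` is a polynomial in `u, uₓ, uₓₓ` and their conjugates,
and once `uₜ` and `∂ₜuₓ = ∂ₓuₜ` are replaced using the equation the identity is algebraic.
The derivatives `u, uₓ, uₓₓ, uₓₓₓ` are `O((1 + x²)⁻¹)` uniformly for `t` in compact sets. Since
`e` and `G` are smooth functions of these jets vanishing at `0`, and `∂ₓG = DG(jet)(∂ₓ jet)`, all
three inherit this integrable bound, with no term-by-term estimates. Differentiating under the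
integral sign then gives `dE/dt = ∫ ∂ₓG dx = 0`.
-/

open ComplexConjugate Filter Function Metric Topology
open scoped ContDiff

section PartialDerivatives

variable {E : Type*} [NormedAddCommGroup E] [NormedSpace ℝ E]

theorem DifferentiableAt.hasDerivAt_partial_fst {g : ℝ × ℝ → E} {s x : ℝ}
    (hg : DifferentiableAt ℝ g (s, x)) :
    HasDerivAt (fun r => g (r, x)) (fderiv ℝ g (s, x) (1, 0)) s :=
  hg.hasFDerivAt.comp_hasDerivAt s ((hasDerivAt_id s).prodMk (hasDerivAt_const s x))

theorem DifferentiableAt.hasDerivAt_partial_snd {g : ℝ × ℝ → E} {s x : ℝ}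
    (hg : DifferentiableAt ℝ g (s, x)) :
    HasDerivAt (fun y => g (s, y)) (fderiv ℝ g (s, x) (0, 1)) x :=
  hg.hasFDerivAt.comp_hasDerivAt x ((hasDerivAt_const x s).prodMk (hasDerivAt_id x))

theorem ContDiff.hasDerivAt_deriv_comm {f : ℝ → ℝ → E} (hf : ContDiff ℝ 2 (uncurry f))
    (s x : ℝ) :
    HasDerivAt (fun r => deriv (f r) x) (deriv (fun y => deriv (fun r => f r y) s) x) s := by
  have hdiff : Differentiable ℝ (uncurry f) := hf.differentiable (by norm_num)
  have hdiff' : Differentiable ℝ (fderiv ℝ (uncurry f)) :=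
    (hf.fderiv_right (m := 1) (by norm_num)).differentiable one_ne_zero
  have hsnd : ∀ r, deriv (f r) x = fderiv ℝ (uncurry f) (r, x) (0, 1) := fun r =>
    (hdiff (r, x)).hasDerivAt_partial_snd.deriv
  have hfst : ∀ y, deriv (fun r => f r y) s = fderiv ℝ (uncurry f) (s, y) (1, 0) := fun y =>
    (hdiff (s, y)).hasDerivAt_partial_fst.deriv
  simp only [hsnd, hfst]
  rw [((hdiff' (s, x)).hasDerivAt_partial_snd.clm_apply
    (hasDerivAt_const x ((1, 0) : ℝ × ℝ))).deriv]
  convert (hdiff' (s, x)).hasDerivAt_partial_fst.clm_apply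
    (hasDerivAt_const s ((0, 1) : ℝ × ℝ)) using 1
  simpa using hf.contDiffAt.isSymmSndFDerivAt (by simp) (0, 1) (1, 0)

end PartialDerivatives

section Jets

variable {E F : Type*} [NormedAddCommGroup E] [NormedSpace ℝ E] [NormedAddCommGroup F]
  [NormedSpace ℝ F]

theorem ContDiff.exists_norm_fderiv_le [FiniteDimensional ℝ E] {Φ : E → F}
    (hΦ : ContDiff ℝ 1 Φ) {R : ℝ} (hR : 0 ≤ R) :
    ∃ M, 0 ≤ M ∧ ∀ v ∈ closedBall (0 : E) R, ‖fderiv ℝ Φ v‖ ≤ M := by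
  obtain ⟨M, hM⟩ := (isCompact_closedBall (0 : E) R).exists_bound_of_continuousOn
    (hΦ.continuous_fderiv one_ne_zero).continuousOn
  exact ⟨M, (norm_nonneg _).trans (hM 0 (mem_closedBall_self hR)), hM⟩

variable {v : ℝ → E}

theorem ContDiff.hasDerivAt_iterate_deriv (hv : ContDiff ℝ ∞ v) (n : ℕ) (x : ℝ) :
    HasDerivAt (deriv^[n] v) (deriv^[n + 1] v x) x := by
  rw [Function.iterate_succ_apply']
  exact ((hv.iterate_deriv n).differentiable (by simp) x).hasDerivAt

theorem ContDiff.deriv_comp_jet {Φ : E × E × E → F} (hΦ : Differentiable ℝ Φ)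
    (hv : ContDiff ℝ ∞ v) (x : ℝ) :
    deriv (fun y => Φ (v y, deriv v y, deriv (deriv v) y)) x =
      fderiv ℝ Φ (v x, deriv v x, deriv (deriv v) x)
        (deriv v x, deriv (deriv v) x, deriv (deriv (deriv v)) x) :=
  ((hΦ _).hasFDerivAt.comp_hasDerivAt x ((hv.hasDerivAt_iterate_deriv 0 x).prodMk
    ((hv.hasDerivAt_iterate_deriv 1 x).prodMk (hv.hasDerivAt_iterate_deriv 2 x)))).deriv

end Jets

section Decay

variable {E F : Type*} [NormedAddCommGroup E] [NormedAddCommGroup F]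

def DecaysUniformlyOn (K : Set ℝ) (f : ℝ → ℝ → E) : Prop :=
  ∃ C, ∀ s ∈ K, ∀ x, ‖f s x‖ ≤ C * (1 + x ^ 2)⁻¹

namespace DecaysUniformlyOn

variable {K : Set ℝ} {f : ℝ → ℝ → E} {g : ℝ → ℝ → F}

theorem exists_nonneg_bounds (hf : DecaysUniformlyOn K f) :
    ∃ C, 0 ≤ C ∧ ∀ s ∈ K, ∀ x, ‖f s x‖ ≤ C * (1 + x ^ 2)⁻¹ ∧ ‖f s x‖ ≤ C := by
  obtain ⟨C, hC⟩ := hf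
  refine ⟨max C 0, le_max_right _ _, fun s hs x => ?_⟩
  have hw : (1 + x ^ 2)⁻¹ ≤ 1 := inv_le_one_of_one_le₀ (by nlinarith)
  have hdecay : ‖f s x‖ ≤ max C 0 * (1 + x ^ 2)⁻¹ :=
    (hC s hs x).trans (by gcongr; exact le_max_left _ _)
  exact ⟨hdecay, hdecay.trans (mul_le_of_le_one_right (le_max_right _ _) hw)⟩

theorem prodMk (hf : DecaysUniformlyOn K f) (hg : DecaysUniformlyOn K g) :
    DecaysUniformlyOn K (fun s x => (f s x, g s x)) := by
  obtain ⟨C, hC⟩ := hf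
  obtain ⟨D, hD⟩ := hg
  refine ⟨max C D, fun s hs x => norm_prod_le_iff.2 ⟨?_, ?_⟩⟩
  · exact (hC s hs x).trans (by gcongr; exact le_max_left _ _)
  · exact (hD s hs x).trans (by gcongr; exact le_max_right _ _)

theorem integrable (hf : DecaysUniformlyOn K f) {s : ℝ} (hs : s ∈ K) (hfs : Continuous (f s)) :
    Integrable (f s) := by
  obtain ⟨C, hC⟩ := hf
  exact (integrable_inv_one_add_sq.const_mul C).mono' hfs.aestronglyMeasurable
    (Eventually.of_forall (hC s hs))

variable [NormedSpace ℝ E] [FiniteDimensional ℝ E] [NormedSpace ℝ F] {Φ : E → F}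

theorem contDiff_comp (hΦ : ContDiff ℝ 1 Φ) (hΦ0 : Φ 0 = 0) (hf : DecaysUniformlyOn K f) :
    DecaysUniformlyOn K (fun s x => Φ (f s x)) := by
  obtain ⟨C, hC0, hC⟩ := hf.exists_nonneg_bounds
  obtain ⟨M, hM0, hM⟩ := hΦ.exists_norm_fderiv_le hC0
  refine ⟨M * C, fun s hs x => ?_⟩
  have hlip := (convex_closedBall (0 : E) C).norm_image_sub_le_of_norm_fderiv_le
    (fun v _ => hΦ.differentiable one_ne_zero v) hM (mem_closedBall_self hC0)
    (mem_closedBall_zero_iff.2 (hC s hs x).2)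
  rw [hΦ0, sub_zero, sub_zero] at hlip
  calc ‖Φ (f s x)‖ ≤ M * ‖f s x‖ := hlip
    _ ≤ M * (C * (1 + x ^ 2)⁻¹) := by gcongr; exact (hC s hs x).1
    _ = M * C * (1 + x ^ 2)⁻¹ := by ring

theorem fderiv_apply (hΦ : ContDiff ℝ 1 Φ) {v : ℝ → ℝ → E} (hf : DecaysUniformlyOn K f)
    (hv : DecaysUniformlyOn K v) :
    DecaysUniformlyOn K (fun s x => fderiv ℝ Φ (f s x) (v s x)) := by
  obtain ⟨C, hC0, hC⟩ := hf.exists_nonneg_bounds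
  obtain ⟨D, -, hD⟩ := hv.exists_nonneg_bounds
  obtain ⟨M, hM0, hM⟩ := hΦ.exists_norm_fderiv_le hC0
  refine ⟨M * D, fun s hs x => ?_⟩
  calc ‖fderiv ℝ Φ (f s x) (v s x)‖ ≤ ‖fderiv ℝ Φ (f s x)‖ * ‖v s x‖ :=
        (fderiv ℝ Φ (f s x)).le_opNorm _
    _ ≤ M * (D * (1 + x ^ 2)⁻¹) := by
      gcongr
      exacts [hM _ (mem_closedBall_zero_iff.2 (hC s hs x).2), (hD s hs x).1]
    _ = M * D * (1 + x ^ 2)⁻¹ := by ring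

end DecaysUniformlyOn

theorem hasDerivAt_integral_of_decaysUniformlyOn [NormedSpace ℝ E] {f f' : ℝ → ℝ → E}
    {K : Set ℝ} {t : ℝ} (hK : K ∈ 𝓝 t) (hf : Integrable (f t)) (hfc : ∀ s, Continuous (f s))
    (hf' : DecaysUniformlyOn K f') (hf'c : Continuous (f' t))
    (hff' : ∀ s ∈ K, ∀ x, HasDerivAt (fun r => f r x) (f' s x) s) :
    HasDerivAt (fun s => ∫ x, f s x) (∫ x, f' t x) t := by
  obtain ⟨C, hC⟩ := hf'
  exact (hasDerivAt_integral_of_dominated_loc_of_deriv_le hK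
    (Eventually.of_forall fun s => (hfc s).aestronglyMeasurable) hf hf'c.aestronglyMeasurable
    (Eventually.of_forall fun x s hs => hC s hs x) (integrable_inv_one_add_sq.const_mul C)
    (Eventually.of_forall fun x s hs => hff' s hs x)).2

end Decay

section ComplexCalculus

variable {E : Type*} [NormedAddCommGroup E] [NormedSpace ℝ E] {n : WithTop ℕ∞} {f : E → ℂ}

@[fun_prop]
theorem ContDiff.complex_conj (hf : ContDiff ℝ n f) : ContDiff ℝ n (fun x => conj (f x)) :=
  conjCLE.contDiff.comp hf

theorem ContDiff.complex_re (hf : ContDiff ℝ n f) : ContDiff ℝ n (fun x => (f x).re) :=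
  reCLM.contDiff.comp hf

theorem HasDerivAt.complex_re {g : ℝ → ℂ} {g' : ℂ} {x : ℝ} (hg : HasDerivAt g g' x) :
    HasDerivAt (fun y => (g y).re) g'.re x :=
  reCLM.hasFDerivAt.comp_hasDerivAt x hg

theorem HasDerivAt.ofReal_norm_sq_mul_self {g : ℝ → ℂ} {g' : ℂ} {x : ℝ}
    (hg : HasDerivAt g g' x) :
    HasDerivAt (fun y => (‖g y‖ : ℂ) ^ 2 * g y)
      (2 * (g x * conj (g x) * g') + g x ^ 2 * conj g') x := by
  simp only [← conj_mul', starRingEnd_apply]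
  refine ((hg.star.fun_mul hg).fun_mul hg).congr_deriv ?_
  ring

end ComplexCalculus

section EnergyFlux

noncomputable def energyDensity (z w : ℂ) : ℝ :=
  ‖w‖ ^ 2 - (3 / 2) * ((‖z‖ : ℂ) ^ 2 * z * conj w).im + (1 / 2) * ‖z‖ ^ 6

/-- DNLS solved for the time derivative: `∂ₜu = dnlsField u ∂ₓu ∂ₓ²u`. -/
noncomputable def dnlsField (a b c : ℂ) : ℂ :=
  I * c - (2 * (a * conj a * b) + a ^ 2 * conj b)

/-- The energy flux as a function of `(u, ∂ₓu, ∂ₓ²u)`. -/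
noncomputable def energyFlux (a b c : ℂ) : ℝ :=
  (I * (conj b * c - b * conj c) - 1 / 2 * (conj a ^ 2 * b ^ 2 + a ^ 2 * conj b ^ 2)
    - 5 * (a * conj a * b * conj b) + 3 / 4 * (a * conj a) * (conj a * c + a * conj c)
    + 9 / 4 * I * (a * conj a) ^ 2 * (conj a * b - a * conj b) - 9 / 8 * (a * conj a) ^ 4).re

theorem energy_eq_integral_energyDensity (v : ℝ → ℂ) :
    energy v = ∫ x, energyDensity (v x) (deriv v x) := rfl

theorem energyDensity_eq_re (z w : ℂ) :
    energyDensity z w = (w * conj w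
      + 3 / 4 * I * (z * conj z * z * conj w - conj z * z * conj z * w)
      + 1 / 2 * (z * conj z) ^ 3).re := by
  have hw : ‖w‖ ^ 2 = w.re * w.re + w.im * w.im := by rw [Complex.sq_norm, normSq_apply]
  have hz : ‖z‖ ^ 6 = (z.re * z.re + z.im * z.im) ^ 3 := by
    rw [show 6 = 2 * 3 by norm_num, pow_mul, Complex.sq_norm, normSq_apply]
  have hz' : (‖z‖ : ℂ) ^ 2 = conj z * z := (conj_mul' z).symm
  simp only [energyDensity, hw, hz, hz', add_re, sub_re, sub_im, mul_re, mul_im, I_re,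
    I_im, conj_re, conj_im, div_re, div_im, re_ofNat, im_ofNat, one_re, one_im, pow_succ,
    pow_zero, normSq_ofNat]
  ring

theorem contDiff_energyDensity {n : WithTop ℕ∞} :
    ContDiff ℝ n (fun p : ℂ × ℂ => energyDensity p.1 p.2) := by
  simp only [energyDensity_eq_re]
  exact ContDiff.complex_re (by fun_prop)

theorem contDiff_energyFlux {n : WithTop ℕ∞} :
    ContDiff ℝ n (fun p : ℂ × ℂ × ℂ => energyFlux p.1 p.2.1 p.2.2) :=
  ContDiff.complex_re (by fun_prop)

theorem energyDensity_zero : energyDensity 0 0 = 0 := by simp [energyDensity]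

theorem energyFlux_zero : energyFlux 0 0 0 = 0 := by simp [energyFlux]

theorem hasDerivAt_energyDensity_of_dnlsField {v a b : ℝ → ℂ} (hv : ContDiff ℝ ∞ v) {s x : ℝ}
    (ha : HasDerivAt a (dnlsField (v x) (deriv v x) (deriv (deriv v) x)) s)
    (hb : HasDerivAt b (deriv (fun y => dnlsField (v y) (deriv v y) (deriv (deriv v) y)) x) s)
    (ha0 : a s = v x) (hb0 : b s = deriv v x) :
    HasDerivAt (fun r => energyDensity (a r) (b r))
      (deriv (fun y => energyFlux (v y) (deriv v y) (deriv (deriv v) y)) x) s := by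
  have h0 : HasDerivAt v (deriv v x) x := hv.hasDerivAt_iterate_deriv 0 x
  have h1 : HasDerivAt (deriv v) (deriv (deriv v) x) x := hv.hasDerivAt_iterate_deriv 1 x
  have h2 : HasDerivAt (deriv (deriv v)) (deriv (deriv (deriv v)) x) x :=
    hv.hasDerivAt_iterate_deriv 2 x
  simp only [dnlsField, energyDensity_eq_re, energyFlux, starRingEnd_apply] at ha hb ⊢
  have hN := (h2.const_mul I).fun_sub ((((h0.fun_mul h0.star).fun_mul h1).const_mul 2).fun_add
    ((h0.fun_pow 2).fun_mul h1.star))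
  rw [hN.deriv] at hb
  have hE := (((hb.fun_mul hb.star).fun_add
    (((((ha.fun_mul ha.star).fun_mul ha).fun_mul hb.star).fun_sub
      (((ha.star.fun_mul ha).fun_mul ha.star).fun_mul hb)).const_mul (3 / 4 * I))).fun_add
    (((ha.fun_mul ha.star).fun_pow 3).const_mul (1 / 2))).complex_re
  have hG := ((((((((h1.star.fun_mul h2).fun_sub (h1.fun_mul h2.star)).const_mul I).fun_sub
    ((((h0.star.fun_pow 2).fun_mul (h1.fun_pow 2)).fun_add
      ((h0.fun_pow 2).fun_mul (h1.star.fun_pow 2))).const_mul (1 / 2))).fun_sub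
    ((((h0.fun_mul h0.star).fun_mul h1).fun_mul h1.star).const_mul 5)).fun_add
    (((h0.fun_mul h0.star).const_mul (3 / 4)).fun_mul
      ((h0.star.fun_mul h2).fun_add (h0.fun_mul h2.star)))).fun_add
    ((((h0.fun_mul h0.star).fun_pow 2).const_mul (9 / 4 * I)).fun_mul
      ((h0.star.fun_mul h1).fun_sub (h0.fun_mul h1.star)))).fun_sub
    (((h0.fun_mul h0.star).fun_pow 4).const_mul (9 / 8))).complex_re
  rw [hG.deriv]
  refine hE.congr_deriv ?_
  rw [ha0, hb0]
  congr 1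
  simp only [Complex.star_def, map_sub, map_add, map_mul, map_pow, map_ofNat, conj_conj, conj_I,
    Nat.cast_ofNat]
  ring_nf
  simp only [I_sq]
  ring_nf

end EnergyFlux

namespace IsDNLSSolution

variable {u : ℝ → ℝ → ℂ} (hu : IsDNLSSolution u)
include hu

theorem contDiff_uncurry : ContDiff ℝ ∞ (uncurry u) := hu.1

theorem contDiff_apply (s : ℝ) : ContDiff ℝ ∞ (u s) :=
  hu.contDiff_uncurry.comp (contDiff_const.prodMk contDiff_id)

theorem deriv_time (s x : ℝ) :
    deriv (fun r => u r x) s = dnlsField (u s x) (deriv (u s) x) (deriv (deriv (u s)) x) := by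
  have h := hu.2.2.2 s x
  rw [((hu.contDiff_apply s).differentiable (by simp) x).hasDerivAt.ofReal_norm_sq_mul_self.deriv]
    at h
  unfold dnlsField
  linear_combination (-I) * h + (deriv (fun r => u r x) s
    + (2 * (u s x * conj (u s x) * deriv (u s) x) + u s x ^ 2 * conj (deriv (u s) x))) * I_sq

theorem hasDerivAt_time (s x : ℝ) :
    HasDerivAt (fun r => u r x) (dnlsField (u s x) (deriv (u s) x) (deriv (deriv (u s)) x)) s := by
  rw [← hu.deriv_time]
  exact ((hu.contDiff_uncurry.comp (contDiff_id.prodMk contDiff_const)).differentiable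
    (by simp) s).hasDerivAt

theorem hasDerivAt_time_deriv (s x : ℝ) :
    HasDerivAt (fun r => deriv (u r) x)
      (deriv (fun y => dnlsField (u s y) (deriv (u s) y) (deriv (deriv (u s)) y)) x) s := by
  have h := (hu.contDiff_uncurry.of_le (WithTop.coe_le_coe.2 le_top)).hasDerivAt_deriv_comm s x
  rwa [show (fun y => deriv (fun r => u r y) s) = _ from funext (hu.deriv_time s)] at h

theorem hasDerivAt_energyDensity (s x : ℝ) :
    HasDerivAt (fun r => energyDensity (u r x) (deriv (u r) x))
      (deriv (fun y => energyFlux (u s y) (deriv (u s) y) (deriv (deriv (u s)) y)) x) s :=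
  hasDerivAt_energyDensity_of_dnlsField (hu.contDiff_apply s) (hu.hasDerivAt_time s x)
    (hu.hasDerivAt_time_deriv s x) rfl rfl

theorem continuous_energyDensity_apply (s : ℝ) :
    Continuous (fun x => energyDensity (u s x) (deriv (u s) x)) :=
  (contDiff_energyDensity (n := 0)).continuous.comp
    ((hu.contDiff_apply s).continuous.prodMk ((hu.contDiff_apply s).continuous_deriv (by simp)))

theorem contDiff_energyFlux_apply (s : ℝ) :
    ContDiff ℝ ∞ (fun y => energyFlux (u s y) (deriv (u s) y) (deriv (deriv (u s)) y)) := by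
  have hv := hu.contDiff_apply s
  have h1 : ContDiff ℝ ∞ (deriv (u s)) := hv.iterate_deriv 1
  have h2 : ContDiff ℝ ∞ (deriv (deriv (u s))) := hv.iterate_deriv 2
  exact (contDiff_energyFlux.comp (hv.prodMk (h1.prodMk h2)) :)

section Decay

variable {K : Set ℝ} (hK : IsCompact K)
include hK

theorem decaysUniformlyOn_iterate_deriv (n : ℕ) :
    DecaysUniformlyOn K (fun s x => deriv^[n] (u s) x) := by
  obtain ⟨C₀, h₀⟩ := hu.2.2.1 0 n 0 K hK
  obtain ⟨C₂, h₂⟩ := hu.2.2.1 0 n 2 K hK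
  refine ⟨C₀ + C₂, fun s hs x => ?_⟩
  have e₀ := h₀ s hs x
  have e₂ := h₂ s hs x
  simp only [iteratedDeriv_zero, pow_zero, one_mul, sq_abs] at e₀ e₂
  rw [iteratedDeriv_eq_iterate] at e₀ e₂
  rw [← div_eq_mul_inv, le_div_iff₀ (by positivity)]
  nlinarith

theorem decaysUniformlyOn_energyDensity :
    DecaysUniformlyOn K (fun s x => energyDensity (u s x) (deriv (u s) x)) :=
  (((hu.decaysUniformlyOn_iterate_deriv hK 0).prodMk
    (hu.decaysUniformlyOn_iterate_deriv hK 1)).contDiff_comp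
    contDiff_energyDensity energyDensity_zero :)

theorem decaysUniformlyOn_energyFlux :
    DecaysUniformlyOn K
      (fun s x => energyFlux (u s x) (deriv (u s) x) (deriv (deriv (u s)) x)) :=
  (((hu.decaysUniformlyOn_iterate_deriv hK 0).prodMk
    ((hu.decaysUniformlyOn_iterate_deriv hK 1).prodMk
      (hu.decaysUniformlyOn_iterate_deriv hK 2))).contDiff_comp
    contDiff_energyFlux energyFlux_zero :)

theorem decaysUniformlyOn_deriv_energyFlux :
    DecaysUniformlyOn K (fun s x =>
      deriv (fun y => energyFlux (u s y) (deriv (u s) y) (deriv (deriv (u s)) y)) x) := by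
  have hΦ : ContDiff ℝ 1 (fun p : ℂ × ℂ × ℂ => energyFlux p.1 p.2.1 p.2.2) := contDiff_energyFlux
  have hjet (s x : ℝ) := (hu.contDiff_apply s).deriv_comp_jet (hΦ.differentiable one_ne_zero) x
  have h0 : DecaysUniformlyOn K fun s x => u s x := hu.decaysUniformlyOn_iterate_deriv hK 0
  have h1 : DecaysUniformlyOn K fun s x => deriv (u s) x :=
    hu.decaysUniformlyOn_iterate_deriv hK 1
  have h2 : DecaysUniformlyOn K fun s x => deriv (deriv (u s)) x :=
    hu.decaysUniformlyOn_iterate_deriv hK 2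
  have h3 : DecaysUniformlyOn K fun s x => deriv (deriv (deriv (u s))) x :=
    hu.decaysUniformlyOn_iterate_deriv hK 3
  simpa only [hjet] using (h0.prodMk (h1.prodMk h2)).fderiv_apply hΦ (h1.prodMk (h2.prodMk h3))

end Decay

theorem integral_deriv_energyFlux (t : ℝ) :
    ∫ x, deriv (fun y => energyFlux (u t y) (deriv (u t) y) (deriv (deriv (u t)) y)) x = 0 := by
  have hG := hu.contDiff_energyFlux_apply t
  have ht : t ∈ ({t} : Set ℝ) := rfl
  exact integral_eq_zero_of_hasDerivAt_of_integrable
    (fun x => (hG.differentiable (by simp) x).hasDerivAt)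
    ((hu.decaysUniformlyOn_deriv_energyFlux isCompact_singleton).integrable ht
      (hG.continuous_deriv (by simp)))
    ((hu.decaysUniformlyOn_energyFlux isCompact_singleton).integrable ht hG.continuous)

theorem hasDerivAt_energy (t : ℝ) : HasDerivAt (fun s => energy (u s)) 0 t := by
  have hK : IsCompact (closedBall t 1) := isCompact_closedBall t 1
  have ht : t ∈ closedBall t 1 := mem_closedBall_self zero_le_one
  simpa only [← energy_eq_integral_energyDensity, hu.integral_deriv_energyFlux] using
    hasDerivAt_integral_of_decaysUniformlyOn (closedBall_mem_nhds t one_pos)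
      ((hu.decaysUniformlyOn_energyDensity hK).integrable ht (hu.continuous_energyDensity_apply t))
      hu.continuous_energyDensity_apply (hu.decaysUniformlyOn_deriv_energyFlux hK)
      ((hu.contDiff_energyFlux_apply t).continuous_deriv (by simp))
      (fun s _ x => hu.hasDerivAt_energyDensity s x)

end IsDNLSSolution

/-- Conservation of energy for DNLS: `E(u(t))` is independent of time. -/
theorem dnls_energy_conservation (u : ℝ → ℝ → ℂ) (hu : IsDNLSSolution u) (t₁ t₂ : ℝ) :
    energy (u t₁) = energy (u t₂) :=
  is_const_of_deriv_eq_zero (fun t => (hu.hasDerivAt_energy t).differentiableAt)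
    (fun t => (hu.hasDerivAt_energy t).deriv) t₁ t₂
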